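/- Let J(λ) be an End(V⊗V)-valued invertible function, with all matrices weight-preserving, satisfying the dynamical 2-cocycle condition J^{12,3}(λ)(J^{12}(λ-h^{(3)})⊗1) = J^{1,23}(λ)(1⊗J^{23}(λ)), where J^{12,3} and J^{1,23} denote the fusion matrices for (V⊗V, V) and (V, V⊗V) given by the same universal element restricted appropriately. Then R(λ) := J(λ)^{-1} J^{21}(λ) satisfies the quantum dynamical Yang-Baxter equation R^{12}(λ-h^{(3)}) R^{13}(λ) R^{23}(λ-h^{(1)}) = R^{23}(λ) R^{13}(λ-h^{(2)}) R^{12}(λ). -/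

import Mathlib

/- STATEMENT 12: fusion implies exchange (case of trivial universal R-matrix,
ℛ = 1).  If the weight-preserving invertible fusion matrices satisfy the
shifted (dynamical) 2-cocycle condition
  J^{12,3}(λ) · J^{12}(λ - h^{(3)}) = J^{1,23}(λ) · J^{23}(λ),
where the grouped fusion matrices J^{12,3}, J^{1,23} are natural (they commute
with the flips of the factors inside the grouped slot), then
  R(λ) = J(λ)⁻¹ J^{21}(λ)   (J^{21} = P J P)
satisfies the quantum dynamical Yang-Baxter equation. -/

namespace Stmt12

noncomputable section

abbrev Idx (N : ℕ) := Fin N × Fin N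
abbrev Idx3 (N : ℕ) := Fin N × Fin N × Fin N

def shiftW {N : ℕ} (lam : Fin N → ℂ) (c : Fin N) : Fin N → ℂ :=
  fun a => if a = c then lam a - 1 else lam a

def lift12 {N : ℕ} (R : (Fin N → ℂ) → Matrix (Idx N) (Idx N) ℂ) (sh : Bool)
    (lam : Fin N → ℂ) : Matrix (Idx3 N) (Idx3 N) ℂ :=
  fun p q =>
    if p.2.2 = q.2.2 then
      R (if sh then shiftW lam p.2.2 else lam) (p.1, p.2.1) (q.1, q.2.1)
    else 0

def lift13 {N : ℕ} (R : (Fin N → ℂ) → Matrix (Idx N) (Idx N) ℂ) (sh : Bool)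
    (lam : Fin N → ℂ) : Matrix (Idx3 N) (Idx3 N) ℂ :=
  fun p q =>
    if p.2.1 = q.2.1 then
      R (if sh then shiftW lam p.2.1 else lam) (p.1, p.2.2) (q.1, q.2.2)
    else 0

def lift23 {N : ℕ} (R : (Fin N → ℂ) → Matrix (Idx N) (Idx N) ℂ) (sh : Bool)
    (lam : Fin N → ℂ) : Matrix (Idx3 N) (Idx3 N) ℂ :=
  fun p q =>
    if p.1 = q.1 then
      R (if sh then shiftW lam p.1 else lam) (p.2.1, p.2.2) (q.2.1, q.2.2)
    else 0

def QDYB {N : ℕ} (R : (Fin N → ℂ) → Matrix (Idx N) (Idx N) ℂ) : Prop :=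
  ∀ lam : Fin N → ℂ,
    lift12 R true lam * lift13 R false lam * lift23 R true lam =
      lift23 R false lam * lift13 R true lam * lift12 R false lam

/-- The flip on `V ⊗ V`. -/
def Pmat (N : ℕ) : Matrix (Idx N) (Idx N) ℂ :=
  fun p q => if p.1 = q.2 ∧ p.2 = q.1 then 1 else 0

/-- The flip of the first two factors of `V ⊗ V ⊗ V`. -/
def P12mat (N : ℕ) : Matrix (Idx3 N) (Idx3 N) ℂ :=
  fun p q => if p.1 = q.2.1 ∧ p.2.1 = q.1 ∧ p.2.2 = q.2.2 then 1 else 0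

/-- The flip of the last two factors of `V ⊗ V ⊗ V`. -/
def P23mat (N : ℕ) : Matrix (Idx3 N) (Idx3 N) ℂ :=
  fun p q => if p.1 = q.1 ∧ p.2.1 = q.2.2 ∧ p.2.2 = q.2.1 then 1 else 0

/-- Weight-zero (weight-preserving) operators on `V ⊗ V`. -/
def WeightZero2 {N : ℕ} (J : (Fin N → ℂ) → Matrix (Idx N) (Idx N) ℂ) : Prop :=
  ∀ lam p q, J lam p q ≠ 0 → ({p.1, p.2} : Multiset (Fin N)) = {q.1, q.2}

/-- Weight-zero (weight-preserving) operators on `V ⊗ V ⊗ V`. -/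
def WeightZero3 {N : ℕ} (K : (Fin N → ℂ) → Matrix (Idx3 N) (Idx3 N) ℂ) : Prop :=
  ∀ lam p q, K lam p q ≠ 0 →
    ({p.1, p.2.1, p.2.2} : Multiset (Fin N)) = {q.1, q.2.1, q.2.2}

-- ===== auxiliary infrastructure =====

variable {N : ℕ}

/-- permutation matrix of an equiv of `Idx3 N` -/
def Pm (σ : Idx3 N ≃ Idx3 N) : Matrix (Idx3 N) (Idx3 N) ℂ :=
  fun p q => if σ p = q then 1 else 0

def e12 : Idx3 N ≃ Idx3 N :=
  ⟨fun p => (p.2.1, p.1, p.2.2), fun p => (p.2.1, p.1, p.2.2),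
    by rintro ⟨a,b,c⟩; rfl, by rintro ⟨a,b,c⟩; rfl⟩

def e23 : Idx3 N ≃ Idx3 N :=
  ⟨fun p => (p.1, p.2.2, p.2.1), fun p => (p.1, p.2.2, p.2.1),
    by rintro ⟨a,b,c⟩; rfl, by rintro ⟨a,b,c⟩; rfl⟩

def e13 : Idx3 N ≃ Idx3 N :=
  ⟨fun p => (p.2.2, p.2.1, p.1), fun p => (p.2.2, p.2.1, p.1),
    by rintro ⟨a,b,c⟩; rfl, by rintro ⟨a,b,c⟩; rfl⟩

def cyc : Idx3 N ≃ Idx3 N :=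
  ⟨fun p => (p.2.1, p.2.2, p.1), fun p => (p.2.2, p.1, p.2.1),
    by rintro ⟨a,b,c⟩; rfl, by rintro ⟨a,b,c⟩; rfl⟩

def cyc' : Idx3 N ≃ Idx3 N :=
  ⟨fun p => (p.2.2, p.1, p.2.1), fun p => (p.2.1, p.2.2, p.1),
    by rintro ⟨a,b,c⟩; rfl, by rintro ⟨a,b,c⟩; rfl⟩

lemma e12_symm : (e12 (N := N)).symm = e12 := rfl
lemma e23_symm : (e23 (N := N)).symm = e23 := rfl
lemma e13_symm : (e13 (N := N)).symm = e13 := rfl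
lemma cyc_symm : (cyc (N := N)).symm = cyc' := rfl
lemma cyc'_symm : (cyc' (N := N)).symm = cyc := rfl

lemma Pm_mul (σ : Idx3 N ≃ Idx3 N) (M : Matrix (Idx3 N) (Idx3 N) ℂ) :
    Pm σ * M = M.submatrix σ id := by
  ext p q
  simp [Pm, Matrix.mul_apply, ite_mul, one_mul, zero_mul]

lemma mul_Pm (M : Matrix (Idx3 N) (Idx3 N) ℂ) (σ : Idx3 N ≃ Idx3 N) :
    M * Pm σ = M.submatrix id σ.symm := by
  ext p q
  simp only [Pm, Matrix.mul_apply, mul_ite, mul_one, mul_zero,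
    Matrix.submatrix_apply, id_eq]
  rw [Finset.sum_eq_single (σ.symm q)] <;> simp +contextual [Equiv.apply_eq_iff_eq_symm_apply]

lemma Pm_mul_Pm (σ τ : Idx3 N ≃ Idx3 N) : Pm σ * Pm τ = Pm (σ.trans τ) := by
  rw [Pm_mul]
  ext p q
  simp [Pm, Matrix.submatrix_apply]
  exact if_congr Iff.rfl rfl rfl

lemma Pm_refl : Pm (Equiv.refl (Idx3 N)) = 1 := by
  ext p q
  simp [Pm, Matrix.one_apply]
  exact if_congr Iff.rfl rfl rfl

lemma Pm_conj (σ τ : Idx3 N ≃ Idx3 N) (M : Matrix (Idx3 N) (Idx3 N) ℂ) :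
    Pm σ * M * Pm τ = M.submatrix σ τ.symm := by
  rw [Pm_mul, mul_Pm, Matrix.submatrix_submatrix]
  simp [Function.comp]


-- ===== lifts as block diagonal matrices =====

def asso12 : Idx3 N ≃ (Idx N × Fin N) :=
  ⟨fun p => ((p.1, p.2.1), p.2.2), fun x => (x.1.1, x.1.2, x.2),
    by rintro ⟨a,b,c⟩; rfl, by rintro ⟨⟨a,b⟩,c⟩; rfl⟩

def asso13 : Idx3 N ≃ (Idx N × Fin N) :=
  ⟨fun p => ((p.1, p.2.2), p.2.1), fun x => (x.1.1, x.2, x.1.2),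
    by rintro ⟨a,b,c⟩; rfl, by rintro ⟨⟨a,b⟩,c⟩; rfl⟩

def asso23 : Idx3 N ≃ (Idx N × Fin N) :=
  ⟨fun p => ((p.2.1, p.2.2), p.1), fun x => (x.2, x.1.1, x.1.2),
    by rintro ⟨a,b,c⟩; rfl, by rintro ⟨⟨a,b⟩,c⟩; rfl⟩

lemma lift12_eq (X : (Fin N → ℂ) → Matrix (Idx N) (Idx N) ℂ) (sh : Bool) (lam : Fin N → ℂ) :
    lift12 X sh lam =
      (Matrix.blockDiagonal fun c => X (if sh then shiftW lam c else lam)).submatrix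
        asso12 asso12 := by
  ext p q
  simp [lift12, Matrix.blockDiagonal_apply, asso12]

lemma lift13_eq (X : (Fin N → ℂ) → Matrix (Idx N) (Idx N) ℂ) (sh : Bool) (lam : Fin N → ℂ) :
    lift13 X sh lam =
      (Matrix.blockDiagonal fun c => X (if sh then shiftW lam c else lam)).submatrix
        asso13 asso13 := by
  ext p q
  simp [lift13, Matrix.blockDiagonal_apply, asso13]

lemma lift23_eq (X : (Fin N → ℂ) → Matrix (Idx N) (Idx N) ℂ) (sh : Bool) (lam : Fin N → ℂ) :
    lift23 X sh lam =
      (Matrix.blockDiagonal fun c => X (if sh then shiftW lam c else lam)).submatrix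
        asso23 asso23 := by
  ext p q
  simp [lift23, Matrix.blockDiagonal_apply, asso23]

lemma lift12_mul (X Y : (Fin N → ℂ) → Matrix (Idx N) (Idx N) ℂ) (sh : Bool) (lam : Fin N → ℂ) :
    lift12 X sh lam * lift12 Y sh lam = lift12 (fun m => X m * Y m) sh lam := by
  simp only [lift12_eq, Matrix.submatrix_mul_equiv, ← Matrix.blockDiagonal_mul]

lemma lift13_mul (X Y : (Fin N → ℂ) → Matrix (Idx N) (Idx N) ℂ) (sh : Bool) (lam : Fin N → ℂ) :
    lift13 X sh lam * lift13 Y sh lam = lift13 (fun m => X m * Y m) sh lam := by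
  simp only [lift13_eq, Matrix.submatrix_mul_equiv, ← Matrix.blockDiagonal_mul]

lemma lift23_mul (X Y : (Fin N → ℂ) → Matrix (Idx N) (Idx N) ℂ) (sh : Bool) (lam : Fin N → ℂ) :
    lift23 X sh lam * lift23 Y sh lam = lift23 (fun m => X m * Y m) sh lam := by
  simp only [lift23_eq, Matrix.submatrix_mul_equiv, ← Matrix.blockDiagonal_mul]

lemma lift12_one (sh : Bool) (lam : Fin N → ℂ) :
    lift12 (fun _ => (1 : Matrix (Idx N) (Idx N) ℂ)) sh lam = 1 := by
  rw [lift12_eq]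
  have : (Matrix.blockDiagonal fun _ : Fin N => (1 : Matrix (Idx N) (Idx N) ℂ)) = 1 :=
    Matrix.blockDiagonal_one
  rw [this, Matrix.submatrix_one_equiv]

lemma lift13_one (sh : Bool) (lam : Fin N → ℂ) :
    lift13 (fun _ => (1 : Matrix (Idx N) (Idx N) ℂ)) sh lam = 1 := by
  rw [lift13_eq]
  have : (Matrix.blockDiagonal fun _ : Fin N => (1 : Matrix (Idx N) (Idx N) ℂ)) = 1 :=
    Matrix.blockDiagonal_one
  rw [this, Matrix.submatrix_one_equiv]

lemma lift23_one (sh : Bool) (lam : Fin N → ℂ) :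
    lift23 (fun _ => (1 : Matrix (Idx N) (Idx N) ℂ)) sh lam = 1 := by
  rw [lift23_eq]
  have : (Matrix.blockDiagonal fun _ : Fin N => (1 : Matrix (Idx N) (Idx N) ℂ)) = 1 :=
    Matrix.blockDiagonal_one
  rw [this, Matrix.submatrix_one_equiv]


-- ===== word-rewriting helpers =====

lemma con2 {M₀ : Type*} [Monoid M₀] {a b c : M₀} (h : a * b = c) (x : M₀) :
    a * (b * x) = c * x := by rw [← mul_assoc, h]

lemma rep2 {M₀ : Type*} [Monoid M₀] {a b c d : M₀} (h : a * b = c * d) (x : M₀) :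
    a * (b * x) = c * (d * x) := by rw [← mul_assoc, h, mul_assoc]

lemma inv2 {M₀ : Type*} [Monoid M₀] {a b : M₀} (h : a * b = 1) (x : M₀) :
    a * (b * x) = x := by rw [← mul_assoc, h, one_mul]

lemma Pm_comp {σ τ ρ : Idx3 N ≃ Idx3 N} (h : ∀ p, τ (σ p) = ρ p) :
    Pm σ * Pm τ = Pm ρ := by
  have h2 : σ.trans τ = ρ := Equiv.ext fun p => h p
  rw [Pm_mul_Pm, h2]

lemma f7 : Pm (e12 (N := N)) * Pm e13 = Pm cyc' := Pm_comp (by rintro ⟨a,b,c⟩; rfl)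
lemma f8 : Pm (e23 (N := N)) * Pm e12 = Pm cyc' := Pm_comp (by rintro ⟨a,b,c⟩; rfl)
lemma f9 : Pm (e12 (N := N)) * Pm e23 = Pm cyc := Pm_comp (by rintro ⟨a,b,c⟩; rfl)
lemma f11 : Pm (e23 (N := N)) * Pm e13 = Pm cyc := Pm_comp (by rintro ⟨a,b,c⟩; rfl)
lemma f12 : Pm (cyc' (N := N)) * Pm e23 = Pm e13 := Pm_comp (by rintro ⟨a,b,c⟩; rfl)
lemma f13 : Pm (e12 (N := N)) * Pm cyc' = Pm e13 := Pm_comp (by rintro ⟨a,b,c⟩; rfl)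
lemma f14 : Pm (cyc (N := N)) * Pm e12 = Pm e13 := Pm_comp (by rintro ⟨a,b,c⟩; rfl)
lemma f15 : Pm (e23 (N := N)) * Pm cyc = Pm e13 := Pm_comp (by rintro ⟨a,b,c⟩; rfl)

-- ===== conjugation identities for the lifts =====

lemma conj_c1 (X : (Fin N → ℂ) → Matrix (Idx N) (Idx N) ℂ) (lam : Fin N → ℂ) :
    lift23 X false lam * Pm (e12 (N := N)) = Pm e12 * lift13 X false lam := by
  rw [mul_Pm, Pm_mul, e12_symm]; ext p q; rfl

lemma conj_c2 (X : (Fin N → ℂ) → Matrix (Idx N) (Idx N) ℂ) (lam : Fin N → ℂ) :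
    lift12 X true lam * Pm (e23 (N := N)) = Pm e23 * lift13 X true lam := by
  rw [mul_Pm, Pm_mul, e23_symm]; ext p q; rfl

lemma conj_c3 (X : (Fin N → ℂ) → Matrix (Idx N) (Idx N) ℂ) (lam : Fin N → ℂ) :
    lift12 X true lam * Pm (cyc' (N := N)) = Pm cyc' * lift23 X true lam := by
  rw [mul_Pm, Pm_mul, cyc'_symm]; ext p q; rfl

lemma conj_c4 (X : (Fin N → ℂ) → Matrix (Idx N) (Idx N) ℂ) (lam : Fin N → ℂ) :
    lift23 X false lam * Pm (cyc (N := N)) = Pm cyc * lift12 X false lam := by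
  rw [mul_Pm, Pm_mul, cyc_symm]; ext p q; rfl

-- ===== the permutation matrices of the statement =====

lemma P12mat_eq : P12mat N = Pm e12 := by
  ext ⟨a,b,c⟩ ⟨d,e,f⟩
  exact if_congr (by simp [e12, Prod.ext_iff]; tauto) rfl rfl

lemma P23mat_eq : P23mat N = Pm e23 := by
  ext ⟨a,b,c⟩ ⟨d,e,f⟩
  exact if_congr (by simp [e23, Prod.ext_iff]; tauto) rfl rfl

lemma liftP12 (sh : Bool) (lam : Fin N → ℂ) :
    lift12 (fun _ => Pmat N) sh lam = Pm (e12 (N := N)) := by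
  ext ⟨a,b,c⟩ ⟨d,e,f⟩
  simp only [lift12, Pmat, Pm, e12, Equiv.coe_fn_mk, Prod.ext_iff]
  split_ifs <;> simp_all

lemma liftP13 (sh : Bool) (lam : Fin N → ℂ) :
    lift13 (fun _ => Pmat N) sh lam = Pm (e13 (N := N)) := by
  ext ⟨a,b,c⟩ ⟨d,e,f⟩
  simp only [lift13, Pmat, Pm, e13, Equiv.coe_fn_mk, Prod.ext_iff]
  split_ifs <;> simp_all

lemma liftP23 (sh : Bool) (lam : Fin N → ℂ) :
    lift23 (fun _ => Pmat N) sh lam = Pm (e23 (N := N)) := by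
  ext ⟨a,b,c⟩ ⟨d,e,f⟩
  simp only [lift23, Pmat, Pm, e23, Equiv.coe_fn_mk, Prod.ext_iff]
  split_ifs <;> simp_all


-- ===== inverses of lifts =====

lemma lift12_mul_inv (X : (Fin N → ℂ) → Matrix (Idx N) (Idx N) ℂ)
    (hX : ∀ m, X m * (X m)⁻¹ = 1) (sh : Bool) (lam : Fin N → ℂ) :
    lift12 X sh lam * lift12 (fun m => (X m)⁻¹) sh lam = 1 :=
  calc lift12 X sh lam * lift12 (fun m => (X m)⁻¹) sh lam
      = lift12 (fun m => X m * (X m)⁻¹) sh lam := lift12_mul _ _ _ _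
    _ = lift12 (fun _ => 1) sh lam := by
        rw [show (fun m => X m * (X m)⁻¹) = (fun _ => (1 : Matrix (Idx N) (Idx N) ℂ)) from
          funext hX]
    _ = 1 := lift12_one _ _

lemma lift13_mul_inv (X : (Fin N → ℂ) → Matrix (Idx N) (Idx N) ℂ)
    (hX : ∀ m, X m * (X m)⁻¹ = 1) (sh : Bool) (lam : Fin N → ℂ) :
    lift13 X sh lam * lift13 (fun m => (X m)⁻¹) sh lam = 1 :=
  calc lift13 X sh lam * lift13 (fun m => (X m)⁻¹) sh lam
      = lift13 (fun m => X m * (X m)⁻¹) sh lam := lift13_mul _ _ _ _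
    _ = lift13 (fun _ => 1) sh lam := by
        rw [show (fun m => X m * (X m)⁻¹) = (fun _ => (1 : Matrix (Idx N) (Idx N) ℂ)) from
          funext hX]
    _ = 1 := lift13_one _ _

lemma lift23_mul_inv (X : (Fin N → ℂ) → Matrix (Idx N) (Idx N) ℂ)
    (hX : ∀ m, X m * (X m)⁻¹ = 1) (sh : Bool) (lam : Fin N → ℂ) :
    lift23 X sh lam * lift23 (fun m => (X m)⁻¹) sh lam = 1 :=
  calc lift23 X sh lam * lift23 (fun m => (X m)⁻¹) sh lam
      = lift23 (fun m => X m * (X m)⁻¹) sh lam := lift23_mul _ _ _ _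
    _ = lift23 (fun _ => 1) sh lam := by
        rw [show (fun m => X m * (X m)⁻¹) = (fun _ => (1 : Matrix (Idx N) (Idx N) ℂ)) from
          funext hX]
    _ = 1 := lift23_one _ _

lemma cancel_left {M₀ : Type*} [Monoid M₀] {a x y : M₀} (h : IsUnit a)
    (w : a * x = a * y) : x = y := by
  obtain ⟨u, rfl⟩ := h
  exact (Units.mul_right_inj u).mp w

-- ===== the main abstract computation =====

lemma key (K L A Ai A0 A0i B Bi B2 B2i C Ci C1 C1i : Matrix (Idx3 N) (Idx3 N) ℂ)
    (hKu : IsUnit K) (hAu : IsUnit A)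
    (hAAi : A * Ai = 1) (hBBi : B * Bi = 1) (hCCi : C * Ci = 1)
    (hC1C1i : C1 * C1i = 1) (hB2B2i : B2 * B2i = 1) (hA0A0i : A0 * A0i = 1)
    (hcoc : K * A = L * C)
    (hnK : Pm (e12 (N := N)) * K = K * Pm e12)
    (hnL : Pm (e23 (N := N)) * L = L * Pm e23)
    (hc1 : C * Pm (e12 (N := N)) = Pm e12 * B)
    (hc2 : A * Pm (e23 (N := N)) = Pm e23 * B2)
    (hc3 : A * Pm (cyc' (N := N)) = Pm cyc' * C1)
    (hc4 : C * Pm (cyc (N := N)) = Pm cyc * A0) :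
    Ai * (Pm e12 * (A * (Pm e12 * (Bi * (Pm e13 * (B * (Pm e13 *
      (C1i * (Pm e23 * (C1 * Pm e23)))))))))) =
    Ci * (Pm e23 * (C * (Pm e23 * (B2i * (Pm e13 * (B2 * (Pm e13 *
      (A0i * (Pm e12 * (A0 * Pm e12)))))))))) := by
  apply cancel_left hAu
  apply cancel_left hKu
  have hL :
      K * (A * (Ai * (Pm e12 * (A * (Pm e12 * (Bi * (Pm e13 * (B * (Pm e13 *
        (C1i * (Pm e23 * (C1 * Pm e23)))))))))))) =
      Pm e13 * (K * (A * Pm e13)) := by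
    calc K * (A * (Ai * (Pm e12 * (A * (Pm e12 * (Bi * (Pm e13 * (B * (Pm e13 *
          (C1i * (Pm e23 * (C1 * Pm e23))))))))))))
        = K * (Pm e12 * (A * (Pm e12 * (Bi * (Pm e13 * (B * (Pm e13 *
            (C1i * (Pm e23 * (C1 * Pm e23)))))))))) := by rw [inv2 hAAi]
      _ = Pm e12 * (K * (A * (Pm e12 * (Bi * (Pm e13 * (B * (Pm e13 *
            (C1i * (Pm e23 * (C1 * Pm e23)))))))))) := by rw [← rep2 hnK]
      _ = Pm e12 * (L * (C * (Pm e12 * (Bi * (Pm e13 * (B * (Pm e13 *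
            (C1i * (Pm e23 * (C1 * Pm e23)))))))))) := by rw [rep2 hcoc]
      _ = Pm e12 * (L * (Pm e12 * (B * (Bi * (Pm e13 * (B * (Pm e13 *
            (C1i * (Pm e23 * (C1 * Pm e23)))))))))) := by rw [rep2 hc1]
      _ = Pm e12 * (L * (Pm e12 * (Pm e13 * (B * (Pm e13 *
            (C1i * (Pm e23 * (C1 * Pm e23)))))))) := by rw [inv2 hBBi]
      _ = Pm e12 * (L * (Pm cyc' * (B * (Pm e13 *
            (C1i * (Pm e23 * (C1 * Pm e23))))))) := by rw [con2 f7]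
      _ = Pm e12 * (L * (Pm e23 * (Pm e12 * (B * (Pm e13 *
            (C1i * (Pm e23 * (C1 * Pm e23)))))))) := by rw [← con2 f8]
      _ = Pm e12 * (Pm e23 * (L * (Pm e12 * (B * (Pm e13 *
            (C1i * (Pm e23 * (C1 * Pm e23)))))))) := by rw [← rep2 hnL]
      _ = Pm cyc * (L * (Pm e12 * (B * (Pm e13 *
            (C1i * (Pm e23 * (C1 * Pm e23))))))) := by rw [con2 f9]
      _ = Pm cyc * (L * (C * (Pm e12 * (Pm e13 *
            (C1i * (Pm e23 * (C1 * Pm e23))))))) := by rw [← rep2 hc1]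
      _ = Pm cyc * (K * (A * (Pm e12 * (Pm e13 *
            (C1i * (Pm e23 * (C1 * Pm e23))))))) := by rw [← rep2 hcoc]
      _ = Pm cyc * (K * (A * (Pm cyc' *
            (C1i * (Pm e23 * (C1 * Pm e23)))))) := by rw [con2 f7]
      _ = Pm cyc * (K * (Pm cyc' * (C1 *
            (C1i * (Pm e23 * (C1 * Pm e23)))))) := by rw [rep2 hc3]
      _ = Pm cyc * (K * (Pm cyc' * (Pm e23 * (C1 * Pm e23)))) := by rw [inv2 hC1C1i]
      _ = Pm cyc * (K * (Pm e13 * (C1 * Pm e23))) := by rw [con2 f12]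
      _ = Pm cyc * (K * (Pm e12 * (Pm cyc' * (C1 * Pm e23)))) := by rw [← con2 f13]
      _ = Pm cyc * (Pm e12 * (K * (Pm cyc' * (C1 * Pm e23)))) := by rw [← rep2 hnK]
      _ = Pm e13 * (K * (Pm cyc' * (C1 * Pm e23))) := by rw [con2 f14]
      _ = Pm e13 * (K * (A * (Pm cyc' * Pm e23))) := by rw [← rep2 hc3]
      _ = Pm e13 * (K * (A * Pm e13)) := by rw [f12]
  have hR :
      K * (A * (Ci * (Pm e23 * (C * (Pm e23 * (B2i * (Pm e13 * (B2 * (Pm e13 *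
        (A0i * (Pm e12 * (A0 * Pm e12)))))))))))) =
      Pm e13 * (K * (A * Pm e13)) := by
    calc K * (A * (Ci * (Pm e23 * (C * (Pm e23 * (B2i * (Pm e13 * (B2 * (Pm e13 *
          (A0i * (Pm e12 * (A0 * Pm e12))))))))))))
        = L * (C * (Ci * (Pm e23 * (C * (Pm e23 * (B2i * (Pm e13 * (B2 * (Pm e13 *
            (A0i * (Pm e12 * (A0 * Pm e12)))))))))))) := by rw [rep2 hcoc]
      _ = L * (Pm e23 * (C * (Pm e23 * (B2i * (Pm e13 * (B2 * (Pm e13 *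
            (A0i * (Pm e12 * (A0 * Pm e12)))))))))) := by rw [inv2 hCCi]
      _ = Pm e23 * (L * (C * (Pm e23 * (B2i * (Pm e13 * (B2 * (Pm e13 *
            (A0i * (Pm e12 * (A0 * Pm e12)))))))))) := by rw [← rep2 hnL]
      _ = Pm e23 * (K * (A * (Pm e23 * (B2i * (Pm e13 * (B2 * (Pm e13 *
            (A0i * (Pm e12 * (A0 * Pm e12)))))))))) := by rw [← rep2 hcoc]
      _ = Pm e23 * (K * (Pm e23 * (B2 * (B2i * (Pm e13 * (B2 * (Pm e13 *
            (A0i * (Pm e12 * (A0 * Pm e12)))))))))) := by rw [rep2 hc2]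
      _ = Pm e23 * (K * (Pm e23 * (Pm e13 * (B2 * (Pm e13 *
            (A0i * (Pm e12 * (A0 * Pm e12)))))))) := by rw [inv2 hB2B2i]
      _ = Pm e23 * (K * (Pm cyc * (B2 * (Pm e13 *
            (A0i * (Pm e12 * (A0 * Pm e12))))))) := by rw [con2 f11]
      _ = Pm e23 * (K * (Pm e12 * (Pm e23 * (B2 * (Pm e13 *
            (A0i * (Pm e12 * (A0 * Pm e12)))))))) := by rw [← con2 f9]
      _ = Pm e23 * (Pm e12 * (K * (Pm e23 * (B2 * (Pm e13 *
            (A0i * (Pm e12 * (A0 * Pm e12)))))))) := by rw [← rep2 hnK]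
      _ = Pm cyc' * (K * (Pm e23 * (B2 * (Pm e13 *
            (A0i * (Pm e12 * (A0 * Pm e12))))))) := by rw [con2 f8]
      _ = Pm cyc' * (K * (A * (Pm e23 * (Pm e13 *
            (A0i * (Pm e12 * (A0 * Pm e12))))))) := by rw [← rep2 hc2]
      _ = Pm cyc' * (L * (C * (Pm e23 * (Pm e13 *
            (A0i * (Pm e12 * (A0 * Pm e12))))))) := by rw [rep2 hcoc]
      _ = Pm cyc' * (L * (C * (Pm cyc *
            (A0i * (Pm e12 * (A0 * Pm e12)))))) := by rw [con2 f11]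
      _ = Pm cyc' * (L * (Pm cyc * (A0 *
            (A0i * (Pm e12 * (A0 * Pm e12)))))) := by rw [rep2 hc4]
      _ = Pm cyc' * (L * (Pm cyc * (Pm e12 * (A0 * Pm e12)))) := by rw [inv2 hA0A0i]
      _ = Pm cyc' * (L * (Pm e13 * (A0 * Pm e12))) := by rw [con2 f14]
      _ = Pm cyc' * (L * (Pm e23 * (Pm cyc * (A0 * Pm e12)))) := by rw [← con2 f15]
      _ = Pm cyc' * (Pm e23 * (L * (Pm cyc * (A0 * Pm e12)))) := by rw [← rep2 hnL]
      _ = Pm e13 * (L * (Pm cyc * (A0 * Pm e12))) := by rw [con2 f12]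
      _ = Pm e13 * (L * (C * (Pm cyc * Pm e12))) := by rw [← rep2 hc4]
      _ = Pm e13 * (K * (A * (Pm cyc * Pm e12))) := by rw [← rep2 hcoc]
      _ = Pm e13 * (K * (A * Pm e13)) := by rw [f14]
  exact hL.trans hR.symm


-- ===== decomposition of the lifted R-matrices =====

lemma dec12 (J : (Fin N → ℂ) → Matrix (Idx N) (Idx N) ℂ) (sh : Bool) (lam : Fin N → ℂ) :
    lift12 (fun m => (J m)⁻¹ * (Pmat N * J m * Pmat N)) sh lam =
      lift12 (fun m => (J m)⁻¹) sh lam * (Pm e12 * (lift12 J sh lam * Pm e12)) := by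
  symm
  rw [show (Pm (e12 (N := N)) : Matrix (Idx3 N) (Idx3 N) ℂ) =
    lift12 (fun _ => Pmat N) sh lam from (liftP12 sh lam).symm]
  rw [lift12_mul, lift12_mul, lift12_mul]
  congr 1
  funext m
  simp only [mul_assoc]

lemma dec13 (J : (Fin N → ℂ) → Matrix (Idx N) (Idx N) ℂ) (sh : Bool) (lam : Fin N → ℂ) :
    lift13 (fun m => (J m)⁻¹ * (Pmat N * J m * Pmat N)) sh lam =
      lift13 (fun m => (J m)⁻¹) sh lam * (Pm e13 * (lift13 J sh lam * Pm e13)) := by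
  symm
  rw [show (Pm (e13 (N := N)) : Matrix (Idx3 N) (Idx3 N) ℂ) =
    lift13 (fun _ => Pmat N) sh lam from (liftP13 sh lam).symm]
  rw [lift13_mul, lift13_mul, lift13_mul]
  congr 1
  funext m
  simp only [mul_assoc]

lemma dec23 (J : (Fin N → ℂ) → Matrix (Idx N) (Idx N) ℂ) (sh : Bool) (lam : Fin N → ℂ) :
    lift23 (fun m => (J m)⁻¹ * (Pmat N * J m * Pmat N)) sh lam =
      lift23 (fun m => (J m)⁻¹) sh lam * (Pm e23 * (lift23 J sh lam * Pm e23)) := by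
  symm
  rw [show (Pm (e23 (N := N)) : Matrix (Idx3 N) (Idx3 N) ℂ) =
    lift23 (fun _ => Pmat N) sh lam from (liftP23 sh lam).symm]
  rw [lift23_mul, lift23_mul, lift23_mul]
  congr 1
  funext m
  simp only [mul_assoc]

/-- fusion ⟹ exchange, ℛ = 1: if `J(λ)` is an invertible
weight-preserving fusion matrix, with invertible weight-preserving grouped
fusion matrices `J^{12,3}`, `J^{1,23}` which are natural for the internal
flips, satisfying the dynamical 2-cocycle condition, then
`R(λ) = J(λ)⁻¹ J^{21}(λ)` satisfies the QDYB equation. -/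
theorem fusion_implies_exchange (N : ℕ)
    (J : (Fin N → ℂ) → Matrix (Idx N) (Idx N) ℂ)
    (J123 J1_23 : (Fin N → ℂ) → Matrix (Idx3 N) (Idx3 N) ℂ)
    (hJunit : ∀ lam, IsUnit (J lam))
    (hJ123unit : ∀ lam, IsUnit (J123 lam))
    (hJ1_23unit : ∀ lam, IsUnit (J1_23 lam))
    (hwJ : WeightZero2 J)
    (hwJ123 : WeightZero3 J123)
    (hwJ1_23 : WeightZero3 J1_23)
    (hcocycle : ∀ lam,
      J123 lam * lift12 J true lam = J1_23 lam * lift23 J false lam)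
    (hnat12 : ∀ lam, P12mat N * J123 lam = J123 lam * P12mat N)
    (hnat23 : ∀ lam, P23mat N * J1_23 lam = J1_23 lam * P23mat N) :
    QDYB (fun lam => (J lam)⁻¹ * (Pmat N * J lam * Pmat N)) := by
  unfold QDYB
  intro lam
  have hJi : ∀ m, J m * (J m)⁻¹ = 1 := fun m =>
    Matrix.mul_nonsing_inv _ ((Matrix.isUnit_iff_isUnit_det _).mp (hJunit m))
  rw [dec12 J true lam, dec13 J false lam, dec23 J true lam,
    dec23 J false lam, dec13 J true lam, dec12 J false lam]
  simp only [mul_assoc]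
  exact key (J123 lam) (J1_23 lam)
    (lift12 J true lam) (lift12 (fun m => (J m)⁻¹) true lam)
    (lift12 J false lam) (lift12 (fun m => (J m)⁻¹) false lam)
    (lift13 J false lam) (lift13 (fun m => (J m)⁻¹) false lam)
    (lift13 J true lam) (lift13 (fun m => (J m)⁻¹) true lam)
    (lift23 J false lam) (lift23 (fun m => (J m)⁻¹) false lam)
    (lift23 J true lam) (lift23 (fun m => (J m)⁻¹) true lam)
    (hJ123unit lam)
    ⟨⟨_, _, lift12_mul_inv J hJi true lam,
      mul_eq_one_comm.mp (lift12_mul_inv J hJi true lam)⟩, rfl⟩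
    (lift12_mul_inv J hJi true lam) (lift13_mul_inv J hJi false lam)
    (lift23_mul_inv J hJi false lam) (lift23_mul_inv J hJi true lam)
    (lift13_mul_inv J hJi true lam) (lift12_mul_inv J hJi false lam)
    (hcocycle lam)
    (by rw [← P12mat_eq]; exact hnat12 lam)
    (by rw [← P23mat_eq]; exact hnat23 lam)
    (conj_c1 J lam) (conj_c2 J lam) (conj_c3 J lam) (conj_c4 J lam)


end

end Stmt12
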